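/- (Lemma 7, second part) Let ρ₁ ∈ ℝ, ρ₂ = −(2/√5)ρ₁, ρ₃ = (2√3/√10)ρ₁, and f = ρ₁e₁ + ρ₂e₂ + ρ₃e₃ ∈ ℝ⁴. Then ⟨Vf, h⟩ = 0 for every h ∈ ℝ⁴ with Lh = 0, where V = diag(1, 1/2, −1/2, −1). -/

import Mathlib

open Finset

/-- The linearized collision operator of the one-dimensional Broadwell model with
collision frequency `B`, as a `4 × 4` matrix. -/
noncomputable def LBmat (B : ℝ) : Matrix (Fin 4) (Fin 4) ℝ :=
  (-(B / 3)) • !![-2, Real.sqrt 2, Real.sqrt 2, -2;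
                  Real.sqrt 2, -1, -1, Real.sqrt 2;
                  Real.sqrt 2, -1, -1, Real.sqrt 2;
                  -2, Real.sqrt 2, Real.sqrt 2, -2]

/-- `e₁ = (√2/2, 0, 0, −√2/2)`. -/
noncomputable def eB1 : EuclideanSpace ℝ (Fin 4) :=
  WithLp.toLp 2 ![Real.sqrt 2 / 2, 0, 0, -(Real.sqrt 2 / 2)]

/-- `e₂ = (1/√10, 2/√5, 0, 1/√10)`. -/
noncomputable def eB2 : EuclideanSpace ℝ (Fin 4) :=
  WithLp.toLp 2 ![1 / Real.sqrt 10, 2 / Real.sqrt 5, 0, 1 / Real.sqrt 10]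

/-- `e₃ = (1/√15, −1/√30, √5/√6, 1/√15)`. -/
noncomputable def eB3 : EuclideanSpace ℝ (Fin 4) :=
  WithLp.toLp 2 ![1 / Real.sqrt 15, -(1 / Real.sqrt 30), Real.sqrt 5 / Real.sqrt 6, 1 / Real.sqrt 15]

/-- The diagonal velocity matrix `V = diag(1, 1/2, −1/2, −1)` applied to `f`. -/
noncomputable def VB (f : Fin 4 → ℝ) : Fin 4 → ℝ :=
  ![f 0, f 1 / 2, -(f 2) / 2, -(f 3)]

/-!
The collision operator has rank one: `L = (B/3) u uᵀ` with `u = (−√2, 1, 1, −√2)`, so for `B ≠ 0`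
its kernel is `u^⊥`. The prescribed `ρ₂, ρ₃` make `f = ρ₁ (√2/2, −1, 1, −√2/2)`, hence
`Vf = −(ρ₁/2) u` lies in the range of `L`, which is orthogonal to the kernel.
-/

open Matrix

noncomputable def broadwellCollisionVec : Fin 4 → ℝ :=
  ![-Real.sqrt 2, 1, 1, -Real.sqrt 2]

theorem dotProduct_eq_zero_of_smul_vecMulVec_mulVec_eq_zero {n K : Type*} [Fintype n] [Field K]
    {c : K} {u h : n → K} (hc : c ≠ 0) (hu : u ≠ 0) (hh : (c • vecMulVec u u) *ᵥ h = 0) :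
    u ⬝ᵥ h = 0 := by
  rw [smul_mulVec, vecMulVec_mulVec, op_smul_eq_smul, smul_smul, smul_eq_zero] at hh
  exact (mul_eq_zero.mp (hh.resolve_right hu)).resolve_left hc

theorem LBmat_eq_smul_vecMulVec (B : ℝ) :
    LBmat B = (B / 3) • vecMulVec broadwellCollisionVec broadwellCollisionVec := by
  have hsq : Real.sqrt 2 * Real.sqrt 2 = 2 := Real.mul_self_sqrt (by norm_num)
  ext i j
  fin_cases i <;> fin_cases j <;> simp [LBmat, broadwellCollisionVec, vecMulVec, hsq]

theorem broadwellCollisionVec_ne_zero : broadwellCollisionVec ≠ 0 := fun h => by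
  simpa [broadwellCollisionVec] using congrFun h 1

theorem broadwellCollisionVec_dotProduct_eq_zero {B : ℝ} (hB : B ≠ 0) {h : Fin 4 → ℝ}
    (hh : LBmat B *ᵥ h = 0) : broadwellCollisionVec ⬝ᵥ h = 0 :=
  dotProduct_eq_zero_of_smul_vecMulVec_mulVec_eq_zero (div_ne_zero hB three_ne_zero)
    broadwellCollisionVec_ne_zero (LBmat_eq_smul_vecMulVec B ▸ hh)

theorem smul_eB1_add_smul_eB2_add_smul_eB3 {ρ₁ ρ₂ ρ₃ : ℝ}
    (h2 : ρ₂ = -(2 / Real.sqrt 5) * ρ₁) (h3 : ρ₃ = 2 * Real.sqrt 3 / Real.sqrt 10 * ρ₁) :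
    ρ₁ • eB1.ofLp + ρ₂ • eB2.ofLp + ρ₃ • eB3.ofLp =
      ![ρ₁ * (Real.sqrt 2 / 2), -ρ₁, ρ₁, -(ρ₁ * (Real.sqrt 2 / 2))] := by
  have s10 : Real.sqrt 10 = Real.sqrt 2 * Real.sqrt 5 := by
    rw [← Real.sqrt_mul (by norm_num)]; norm_num
  have s15 : Real.sqrt 15 = Real.sqrt 3 * Real.sqrt 5 := by
    rw [← Real.sqrt_mul (by norm_num)]; norm_num
  have s30 : Real.sqrt 30 = Real.sqrt 2 * Real.sqrt 3 * Real.sqrt 5 := by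
    rw [← Real.sqrt_mul (by norm_num), ← Real.sqrt_mul (by norm_num)]; norm_num
  have s6 : Real.sqrt 6 = Real.sqrt 2 * Real.sqrt 3 := by
    rw [← Real.sqrt_mul (by norm_num)]; norm_num
  have q2 : Real.sqrt 2 ^ 2 = 2 := Real.sq_sqrt (by norm_num)
  have q5 : Real.sqrt 5 ^ 2 = 5 := Real.sq_sqrt (by norm_num)
  subst h2 h3
  ext i
  fin_cases i <;> simp [eB1, eB2, eB3, s10, s15, s30, s6] <;> field_simp <;>
    simp only [q2, q5] <;> ring

theorem VB_smul_eB1_add_smul_eB2_add_smul_eB3 {ρ₁ ρ₂ ρ₃ : ℝ}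
    (h2 : ρ₂ = -(2 / Real.sqrt 5) * ρ₁) (h3 : ρ₃ = 2 * Real.sqrt 3 / Real.sqrt 10 * ρ₁) :
    VB (ρ₁ • eB1.ofLp + ρ₂ • eB2.ofLp + ρ₃ • eB3.ofLp) = -(ρ₁ / 2) • broadwellCollisionVec := by
  rw [smul_eB1_add_smul_eB2_add_smul_eB3 h2 h3]
  ext i
  fin_cases i <;> simp [VB, broadwellCollisionVec] <;> ring

/-- Lemma 7, second part: with `ρ₂ = −(2/√5)ρ₁`, `ρ₃ = (2√3/√10)ρ₁`
and `f = ρ₁e₁ + ρ₂e₂ + ρ₃e₃`, one has `⟨Vf, h⟩ = 0` for every `h` with `Lh = 0`. -/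
theorem broadwell_Vf_orthogonal_ker (B : ℝ) (hB : 0 < B) (ρ₁ ρ₂ ρ₃ : ℝ)
    (h2 : ρ₂ = -(2 / Real.sqrt 5) * ρ₁) (h3 : ρ₃ = 2 * Real.sqrt 3 / Real.sqrt 10 * ρ₁)
    (f : Fin 4 → ℝ) (hf : f = ρ₁ • eB1 + ρ₂ • eB2 + ρ₃ • eB3) :
    ∀ h : Fin 4 → ℝ, (LBmat B).mulVec h = 0 → ∑ i, VB f i * h i = 0 := by
  intro h hh
  change VB f ⬝ᵥ h = 0
  rw [hf, VB_smul_eB1_add_smul_eB2_add_smul_eB3 h2 h3, smul_dotProduct,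
    broadwellCollisionVec_dotProduct_eq_zero hB.ne' hh, smul_zero]
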